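/- Let n ≥ 2 and d ≥ 1 be integers and let μ be a nonzero finite Borel measure on K_n^d that is invariant under permutations of the n ball factors. Set z_0 = μ(K_n^d), z_α = ∫ s_α dμ and z_{αα} = ∫ s_{αα} dμ for 1 ≤ α ≤ d. Then z_0 > 0 and Σ_{α=1}^d max{z_0 z_{αα}/(n−1), z_α²/n} ≤ z_0² + Σ_{α=1}^d z_0 z_{αα}/n. -/

import Mathlib

open scoped BigOperators
open MeasureTheory

/-- `sLin n d α x = ∑ i, ξ_{i,α}` -/
noncomputable def sLin (n d : ℕ) (α : Fin d) (x : Fin n → Fin d → ℝ) : ℝ :=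
  ∑ i, x i α

/-- `sQuad n d α x = ∑_{i ≠ j} ξ_{i,α} ξ_{j,α}` (sum over ordered pairs). -/
noncomputable def sQuad (n d : ℕ) (α : Fin d) (x : Fin n → Fin d → ℝ) : ℝ :=
  ∑ i, ∑ j, if i = j then 0 else x i α * x j α

/-!
Write `T_α = ∫ ∑ᵢ ξ_{i,α}² dμ`, so that `∫ s_α² dμ = z_{αα} + T_α`. Cauchy–Schwarz over the index
pairs gives `s_{αα} ≤ (n - 1) ∑ᵢ ξ_{i,α}²`, hence `z_{αα} ≤ (n - 1) T_α`, and Jensen's inequality for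
`μ` gives `z_α² ≤ z_0 (z_{αα} + T_α)`. Together these bound both terms of the max by
`z_0 (z_{αα} + T_α) / n`, and summing over `α` leaves `z_0 / n · ∑_α T_α ≤ z_0²`, because each
factor `x_i` lies in the unit ball, so `∑_α T_α ≤ n z_0`.
-/

open Finset

theorem sq_integral_le_measureReal_univ_mul_integral_sq {Ω : Type*} [MeasurableSpace Ω]
    {μ : Measure Ω} [IsFiniteMeasure μ] [NeZero μ] {f : Ω → ℝ} (hf : Integrable f μ)
    (hf2 : Integrable (fun x => f x ^ 2) μ) :
    (∫ x, f x ∂μ) ^ 2 ≤ μ.real Set.univ * ∫ x, f x ^ 2 ∂μ := by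
  have hjensen := (even_two.convexOn_pow (𝕜 := ℝ)).map_average_le (continuous_pow 2).continuousOn
    isClosed_univ (by simp) hf hf2
  have hc := measureReal_univ_pos (μ := μ)
  simp only [average_eq, smul_eq_mul, mul_pow] at hjensen
  rw [inv_pow, ← div_eq_inv_mul, div_le_iff₀ (by positivity)] at hjensen
  calc (∫ x, f x ∂μ) ^ 2
      ≤ (μ.real Set.univ)⁻¹ * (∫ x, f x ^ 2 ∂μ) * μ.real Set.univ ^ 2 := hjensen
    _ = μ.real Set.univ * ∫ x, f x ^ 2 ∂μ := by field_simp

theorem integrable_of_continuous_of_ae_mem_isCompact {X : Type*} [TopologicalSpace X] [T2Space X]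
    [MeasurableSpace X] [OpensMeasurableSpace X] {μ : Measure X} [IsFiniteMeasure μ]
    {K : Set X} (hK : IsCompact K) (hμK : ∀ᵐ x ∂μ, x ∈ K) {f : X → ℝ} (hf : Continuous f) :
    Integrable f μ := by
  rw [← Measure.restrict_eq_self_of_ae_mem hμK]
  exact hf.continuousOn.integrableOn_compact hK

theorem isCompact_setOf_sum_sq_le_one (d : ℕ) :
    IsCompact {v : Fin d → ℝ | ∑ α, v α ^ 2 ≤ 1} := by
  refine Metric.isCompact_of_isClosed_isBounded (isClosed_le (by fun_prop) continuous_const)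
    ((Metric.isBounded_closedBall (x := 0) (r := 1)).subset fun v hv => ?_)
  rw [mem_closedBall_zero_iff, pi_norm_le_iff_of_nonneg zero_le_one]
  intro α
  rw [Real.norm_eq_abs, ← sq_le_one_iff_abs_le_one]
  exact (single_le_sum (fun β _ => sq_nonneg (v β)) (mem_univ α)).trans hv

theorem sQuad_eq (n d : ℕ) (α : Fin d) (x : Fin n → Fin d → ℝ) :
    sQuad n d α x = sLin n d α x ^ 2 - ∑ i, x i α ^ 2 := by
  simp only [sQuad, sLin, sq, sum_mul_sum, ← sum_sub_distrib]
  refine sum_congr rfl fun i _ => ?_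
  rw [← sum_erase_add _ _ (mem_univ i), ← sum_erase_add _ _ (mem_univ i), if_pos rfl,
    sum_congr rfl fun j hj => if_neg (ne_of_mem_erase hj).symm]
  ring

theorem sQuad_le (n d : ℕ) (α : Fin d) (x : Fin n → Fin d → ℝ) :
    sQuad n d α x ≤ ((n : ℝ) - 1) * ∑ i, x i α ^ 2 := by
  have hCS := sq_sum_le_card_mul_sum_sq (s := univ) (f := fun i => x i α)
  rw [card_univ, Fintype.card_fin] at hCS
  rw [sQuad_eq, sLin]
  linarith

theorem continuous_sLin (n d : ℕ) (α : Fin d) : Continuous (sLin n d α) := by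
  unfold sLin; fun_prop

theorem continuous_sQuad (n d : ℕ) (α : Fin d) : Continuous (sQuad n d α) := by
  simp only [funext (sQuad_eq n d α)]
  exact ((continuous_sLin n d α).pow 2).sub (by fun_prop)

section BallSupported

variable {n d : ℕ} {μ : Measure (Fin n → Fin d → ℝ)} [IsFiniteMeasure μ]
  (hK : ∀ᵐ x ∂μ, ∀ i, ∑ α, x i α ^ 2 ≤ 1)
include hK

theorem integrable_of_continuous_of_ae_ball {f : (Fin n → Fin d → ℝ) → ℝ} (hf : Continuous f) :
    Integrable f μ :=
  integrable_of_continuous_of_ae_mem_isCompact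
    (isCompact_univ_pi fun _ => isCompact_setOf_sum_sq_le_one d) (by simpa using hK) hf

theorem integral_sQuad_le (α : Fin d) :
    ∫ x, sQuad n d α x ∂μ ≤ ((n : ℝ) - 1) * ∫ x, ∑ i, x i α ^ 2 ∂μ := by
  rw [← integral_const_mul]
  exact integral_mono (integrable_of_continuous_of_ae_ball hK (continuous_sQuad n d α))
    (integrable_of_continuous_of_ae_ball hK (by fun_prop)) (sQuad_le n d α)

theorem sq_integral_sLin_le [NeZero μ] (α : Fin d) :
    (∫ x, sLin n d α x ∂μ) ^ 2
      ≤ μ.real Set.univ * (∫ x, sQuad n d α x ∂μ + ∫ x, ∑ i, x i α ^ 2 ∂μ) := by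
  rw [← integral_add (integrable_of_continuous_of_ae_ball hK (continuous_sQuad n d α))
    (integrable_of_continuous_of_ae_ball hK (by fun_prop))]
  simp only [sQuad_eq, sub_add_cancel]
  exact sq_integral_le_measureReal_univ_mul_integral_sq
    (integrable_of_continuous_of_ae_ball hK (continuous_sLin n d α))
    (integrable_of_continuous_of_ae_ball hK ((continuous_sLin n d α).pow 2))

theorem sum_integral_sum_sq_le :
    ∑ α, ∫ x, ∑ i, x i α ^ 2 ∂μ ≤ n * μ.real Set.univ := by
  rw [← integral_finsetSum _ fun α _ => integrable_of_continuous_of_ae_ball hK (by fun_prop),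
    mul_comm, ← smul_eq_mul, ← integral_const]
  refine integral_mono_ae (integrable_of_continuous_of_ae_ball hK (by fun_prop))
    (integrable_const _) ?_
  filter_upwards [hK] with x hx
  rw [sum_comm]
  simpa using sum_le_sum fun i (_ : i ∈ Finset.univ) => hx i

end BallSupported

theorem max_le_of_le_of_sq_le {m c q t l : ℝ} (hm : 1 < m) (hc : 0 ≤ c)
    (hq : q ≤ (m - 1) * t) (hl : l ^ 2 ≤ c * (q + t)) :
    max (c * q / (m - 1)) (l ^ 2 / m) ≤ c * (q + t) / m := by
  have hm1 : 0 < m - 1 := sub_pos.mpr hm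
  refine max_le ?_ (div_le_div_of_nonneg_right hl (by linarith))
  rw [div_le_div_iff₀ hm1 (by linarith)]
  nlinarith [mul_le_mul_of_nonneg_left hq hc]

theorem stmt_15_general (n d : ℕ) (hn : 2 ≤ n)
    (μ : Measure (Fin n → Fin d → ℝ)) [IsFiniteMeasure μ]
    (hμ : μ ≠ 0)
    -- μ is supported on K_n^d
    (hsupp : μ {x | ¬ ∀ i, ∑ α, (x i α) ^ 2 ≤ 1} = 0)
    (z0 : ℝ) (z zz : Fin d → ℝ)
    (hz0 : z0 = (μ {x | ∀ i, ∑ α, (x i α) ^ 2 ≤ 1}).toReal)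
    (hz : ∀ α, z α = ∫ x, sLin n d α x ∂μ)
    (hzz : ∀ α, zz α = ∫ x, sQuad n d α x ∂μ) :
    0 < z0 ∧
    ∑ α, max (z0 * zz α / ((n : ℝ) - 1)) ((z α) ^ 2 / n)
      ≤ z0 ^ 2 + ∑ α, z0 * zz α / n := by
  have : NeZero μ := ⟨hμ⟩
  have hK : ∀ᵐ x ∂μ, ∀ i, ∑ α, x i α ^ 2 ≤ 1 := ae_iff.mpr hsupp
  have hz0_eq : z0 = μ.real Set.univ := by
    rw [hz0, measure_congr (ae_eq_univ.mpr (by rwa [Set.compl_ofPred])), measureReal_def]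
  have hz0_pos : 0 < z0 := hz0_eq ▸ measureReal_univ_pos
  have hn1 : (1 : ℝ) < n := by exact_mod_cast hn
  set T : Fin d → ℝ := fun α => ∫ x, ∑ i, x i α ^ 2 ∂μ
  have hmax : ∀ α, max (z0 * zz α / ((n : ℝ) - 1)) (z α ^ 2 / n) ≤ z0 * (zz α + T α) / n :=
    fun α => max_le_of_le_of_sq_le hn1 hz0_pos.le (hzz α ▸ integral_sQuad_le hK α)
      (by rw [hz α, hzz α, hz0_eq]; exact sq_integral_sLin_le hK α)
  have hT : ∑ α, z0 * T α / n ≤ z0 ^ 2 :=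
    calc ∑ α, z0 * T α / n = z0 / n * ∑ α, T α := by
          rw [mul_sum]; exact sum_congr rfl fun _ _ => by ring
      _ ≤ z0 / n * (n * z0) := by
          gcongr; exact hz0_eq ▸ sum_integral_sum_sq_le hK
      _ = z0 ^ 2 := by field_simp
  refine ⟨hz0_pos, (sum_le_sum fun α _ => hmax α).trans ?_⟩
  simp only [mul_add, add_div, sum_add_distrib]
  linarith

theorem stmt_15 (n d : ℕ) (hn : 2 ≤ n) (hd : 1 ≤ d)
    (μ : Measure (Fin n → Fin d → ℝ)) [IsFiniteMeasure μ]
    (hμ : μ ≠ 0)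
    -- μ is supported on K_n^d
    (hsupp : μ {x | ¬ ∀ i, ∑ α, (x i α) ^ 2 ≤ 1} = 0)
    -- μ is invariant under permutations of the n ball factors
    (hsym : ∀ σ : Equiv.Perm (Fin n),
      Measure.map (fun x : Fin n → Fin d → ℝ => fun i => x (σ i)) μ = μ)
    (z0 : ℝ) (z zz : Fin d → ℝ)
    (hz0 : z0 = (μ {x | ∀ i, ∑ α, (x i α) ^ 2 ≤ 1}).toReal)
    (hz : ∀ α, z α = ∫ x, sLin n d α x ∂μ)
    (hzz : ∀ α, zz α = ∫ x, sQuad n d α x ∂μ) :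
    0 < z0 ∧
    ∑ α, max (z0 * zz α / ((n : ℝ) - 1)) ((z α) ^ 2 / n)
      ≤ z0 ^ 2 + ∑ α, z0 * zz α / n :=
  stmt_15_general n d hn μ hμ hsupp z0 z zz hz0 hz hzz
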